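/- arXiv:2411.10816 — 5 statements merged into one kernel-verified Lean document; each statement's English description precedes it below -/
import Mathlib

section
/- Let G be a finite simple connected graph that is 2-connected and chordal. Then every pair of adjacent vertices of G forms a hull set of G; that is, for every edge uv of G, the Δ-convex hull of {u, v} equals the whole vertex set V(G). -/
variable {V : Type*}

/-- A set `S` is Δ-convex in `G` if every vertex adjacent to two adjacent vertices of `S`
belongs to `S`. -/
def DeltaConvex (G : SimpleGraph V) (S : Set V) : Prop :=
  ∀ ⦃u v w : V⦄, u ∈ S → v ∈ S → G.Adj u v → G.Adj w u → G.Adj w v → w ∈ S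

/-- The Δ-convex hull of `S`: the smallest Δ-convex set containing `S`. -/
def deltaHull (G : SimpleGraph V) (S : Set V) : Set V :=
  ⋂₀ {T : Set V | S ⊆ T ∧ DeltaConvex G T}

/-- `S` is Helly independent: the intersection of the hulls of the sets `S \ {a}`, `a ∈ S`,
is empty. -/
def HellyIndep (G : SimpleGraph V) (S : Set V) : Prop :=
  (⋂ a ∈ S, deltaHull G (S \ {a})) = ∅

/-- The Helly number of `G` w.r.t. Δ-convexity: the maximum cardinality of a Helly
independent subset of the vertex set. -/
noncomputable def hellyNumber (G : SimpleGraph V) : ℕ :=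
  sSup {n : ℕ | ∃ S : Set V, HellyIndep G S ∧ S.ncard = n}

/-- `S` is Radon independent: no partition of `S` into two nonempty disjoint parts has
intersecting hulls. -/
def RadonIndep (G : SimpleGraph V) (S : Set V) : Prop :=
  ¬ ∃ S₁ S₂ : Set V, S₁ ∪ S₂ = S ∧ Disjoint S₁ S₂ ∧ S₁.Nonempty ∧ S₂.Nonempty ∧
    (deltaHull G S₁ ∩ deltaHull G S₂).Nonempty

/-- The Radon number of `G` w.r.t. Δ-convexity. -/
noncomputable def radonNumber (G : SimpleGraph V) : ℕ :=
  sSup {n : ℕ | ∃ S : Set V, RadonIndep G S ∧ S.ncard = n}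

/-- `S` is convexly independent: `a ∉ ⟨S \ {a}⟩` for every `a ∈ S`. -/
def ConvIndep (G : SimpleGraph V) (S : Set V) : Prop :=
  ∀ a ∈ S, a ∉ deltaHull G (S \ {a})

/-- The rank of `G` w.r.t. Δ-convexity. -/
noncomputable def rankDelta (G : SimpleGraph V) : ℕ :=
  sSup {n : ℕ | ∃ S : Set V, ConvIndep G S ∧ S.ncard = n}

/-- The independence number: maximum cardinality of a set of pairwise non-adjacent
vertices. -/
noncomputable def alphaNum (G : SimpleGraph V) : ℕ :=
  sSup {n : ℕ | ∃ S : Set V, S.Pairwise (fun a b => ¬ G.Adj a b) ∧ S.ncard = n}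

/-- `G` is 2-connected: at least 3 vertices, connected, and deleting any single vertex
leaves a connected graph. -/
def TwoConnected (G : SimpleGraph V) : Prop :=
  3 ≤ Nat.card V ∧ G.Connected ∧ ∀ v : V, (G.induce {u : V | u ≠ v}).Connected

/-- `G` is chordal: every cycle of length at least 4 has a chord, i.e. an edge of `G`
joining two vertices of the cycle that is not an edge of the cycle. -/
def ChordalGraph (G : SimpleGraph V) : Prop :=
  ∀ (v : V) (c : G.Walk v v), c.IsCycle → 4 ≤ c.length →
    ∃ x y : V, x ∈ c.support ∧ y ∈ c.support ∧ G.Adj x y ∧ s(x, y) ∉ c.edges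

/-- `B` induces a connected subgraph of `G` with at least two vertices and no cut vertex
(so: an edge, or a 2-connected subgraph). -/
def NoCutSet (G : SimpleGraph V) (B : Set V) : Prop :=
  2 ≤ B.ncard ∧ (G.induce B).Connected ∧ ∀ v ∈ B, (G.induce (B \ {v})).Connected

/-- `B` is (the vertex set of) a block of `G`: a maximal 2-connected subgraph, where a
bridge together with its endpoints also counts as a block. -/
def IsBlock (G : SimpleGraph V) (B : Set V) : Prop :=
  NoCutSet G B ∧ ∀ B' : Set V, NoCutSet G B' → B ⊆ B' → B = B'

/-- The set `B` induces a complete subgraph of `G`. -/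
def CompleteOn (G : SimpleGraph V) (B : Set V) : Prop :=
  ∀ u ∈ B, ∀ v ∈ B, u ≠ v → G.Adj u v

/-!
Let `H = ⟨{u, v}⟩`; it is Δ-convex and any two of its vertices are joined by a path inside `H`.
If some vertex lies outside `H`, then, `G` being 2-connected, `H` has an ear: a path between two
distinct vertices `a, b ∈ H` whose inner vertices, of which there is at least one, avoid `H`.
Closing the ear by a path of `H` from `b` to `a` gives a cycle; take such a configuration of
minimal length. A triangle is impossible, as its inner vertex is adjacent to the adjacent vertices
`a, b ∈ H`. A longer cycle has a chord since `G` is chordal, and every chord either shortcuts the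
ear or the path in `H`, or joins them and cuts off a shorter configuration.
-/

namespace SimpleGraph.Walk

variable {G : SimpleGraph V} {H : Set V} {u v x y : V}

theorem IsPath.exists_shortcut_of_adj_start {p : G.Walk u v} (hp : p.IsPath)
    (hy : y ∈ p.support) (huy : G.Adj u y) (he : s(u, y) ∉ p.edges) :
    ∃ q : G.Walk u v, q.IsPath ∧ q.length < p.length ∧ q.support ⊆ p.support ∧
      y ∈ q.support := by
  classical
  cases p with
  | nil => exact absurd (by simpa using hy) huy.ne'
  | @cons _ w _ h p =>
    have hy' : y ∈ p.support := by simpa [huy.ne'] using hy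
    have hyw : y ≠ w := by rintro rfl; simp at he
    have hu : u ∉ p.support := ((cons_isPath_iff h p).1 hp).2
    refine ⟨cons huy (p.dropUntil y hy'), ?_, ?_, ?_, ?_⟩
    · exact ((cons_isPath_iff h p).1 hp).1.dropUntil hy' |>.cons
        fun hu' => hu (p.support_dropUntil_subset_support hy' hu')
    · simpa using p.length_dropUntil_lt_length hy' hyw
    · simpa using List.Subset.trans (p.support_dropUntil_subset_support hy')
        (List.subset_cons_self _ _)
    · simp

theorem IsPath.exists_shortcut {p : G.Walk u v} (hp : p.IsPath) (hx : x ∈ p.support)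
    (hy : y ∈ p.support) (hxy : G.Adj x y) (he : s(x, y) ∉ p.edges) :
    ∃ q : G.Walk u v, q.IsPath ∧ q.length < p.length ∧ q.support ⊆ p.support ∧
      x ∈ q.support ∧ y ∈ q.support := by
  induction p with
  | nil =>
    simp only [support_nil, List.mem_singleton] at hx hy
    exact absurd (hx.trans hy.symm) hxy.ne
  | @cons u w _ h p ih =>
    obtain ⟨hp', hu⟩ := (cons_isPath_iff h p).1 hp
    by_cases hxu : x = u
    · subst hxu
      obtain ⟨q, hq⟩ := hp.exists_shortcut_of_adj_start hy hxy he
      exact ⟨q, hq.1, hq.2.1, hq.2.2.1, q.start_mem_support, hq.2.2.2⟩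
    by_cases hyu : y = u
    · subst hyu
      rw [Sym2.eq_swap] at he
      obtain ⟨q, hq⟩ := hp.exists_shortcut_of_adj_start hx hxy.symm he
      exact ⟨q, hq.1, hq.2.1, hq.2.2.1, hq.2.2.2, q.start_mem_support⟩
    obtain ⟨q, hq, hlt, hsub, hxq, hyq⟩ := ih hp' (by simpa [hxu] using hx)
      (by simpa [hyu] using hy) (by simp_all)
    refine ⟨cons h q, hq.cons fun hu' => hu (hsub hu'), by simpa using hlt, ?_, by simp [hxq],
      by simp [hyq]⟩
    simpa using List.Subset.trans hsub (List.subset_cons_self _ _)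

theorem exists_walk_to_first_mem (p : G.Walk u v) (hv : v ∈ H) :
    ∃ b ∈ H, ∃ q : G.Walk u b, q.support ⊆ p.support ∧ ∀ z ∈ q.support, z ∈ H → z = b := by
  induction p with
  | nil => exact ⟨_, hv, nil, by simp, by simp⟩
  | @cons u w _ h p ih =>
    by_cases hu : u ∈ H
    · exact ⟨u, hu, nil, by simp, by simp⟩
    obtain ⟨b, hb, q, hsub, hq⟩ := ih hv
    refine ⟨b, hb, cons h q, ?_, ?_⟩
    · simpa using List.Subset.trans hsub (List.subset_cons_self _ _)
    · simp only [support_cons, List.mem_cons, forall_eq_or_imp]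
      exact ⟨fun h => absurd h hu, hq⟩

theorem IsPath.start_notMem_support_tail {p : G.Walk u v} (hp : p.IsPath) :
    u ∉ p.support.tail := by
  have := hp.support_nodup
  rw [← cons_tail_support] at this
  exact (List.nodup_cons.1 this).1

structure IsEar (H : Set V) (p : G.Walk u v) : Prop where
  isPath : p.IsPath
  start_mem : u ∈ H
  end_mem : v ∈ H
  exists_notMem : ∃ z ∈ p.support, z ∉ H
  eq_or_eq_of_mem : ∀ z ∈ p.support, z ∈ H → z = u ∨ z = v

theorem IsEar.one_lt_length {p : G.Walk u v} (hp : p.IsEar H) : 1 < p.length := by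
  obtain ⟨z, hz, hzH⟩ := hp.exists_notMem
  rcases p with _ | ⟨h, _ | ⟨h', p⟩⟩
  · exact absurd (by simpa using hz) (ne_of_mem_of_not_mem hp.start_mem hzH).symm
  · simp only [support_cons, support_nil, List.mem_cons, List.not_mem_nil, or_false] at hz
    rcases hz with rfl | rfl
    · exact absurd hp.start_mem hzH
    · exact absurd hp.end_mem hzH
  · simp

structure IsEarCycle (H : Set V) (p : G.Walk u v) (q : G.Walk v u) : Prop where
  isEar : p.IsEar H
  isPath : q.IsPath
  mem : ∀ z ∈ q.support, z ∈ H

namespace IsEarCycle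

variable {p : G.Walk u v} {q : G.Walk v u}

theorem notMem_of_notMem_right (h : p.IsEarCycle H q) (hzp : x ∈ p.support)
    (hzq : x ∉ q.support) : x ∉ H := fun hx => by
  rcases h.isEar.eq_or_eq_of_mem x hzp hx with rfl | rfl
  · exact hzq q.end_mem_support
  · exact hzq q.start_mem_support

theorem isCycle (h : p.IsEarCycle H q) : (p.append q).IsCycle := by
  refine h.isEar.isPath.isCycle_append h.isPath (fun z hzp hzq => ?_)
    (Or.inl h.isEar.one_lt_length)
  rcases h.isEar.eq_or_eq_of_mem z (List.mem_of_mem_tail hzp)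
    (h.mem z (List.mem_of_mem_tail hzq)) with rfl | rfl
  · exact h.isEar.isPath.start_notMem_support_tail hzp
  · exact h.isPath.start_notMem_support_tail hzq

theorem three_lt_length (hH : DeltaConvex G H) (h : p.IsEarCycle H q) :
    3 < p.length + q.length := by
  have hplen := h.isEar.one_lt_length
  have hqlen : q.length ≠ 0 := fun h0 => by
    obtain rfl := eq_of_length_eq_zero h0
    simp [length_eq_zero_iff.2 (isPath_iff_nil.1 h.isEar.isPath)] at hplen
  by_contra! hle
  have hp2 : p.length = 2 := by omega
  have hq1 : q.length = 1 := by omega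
  obtain ⟨z, hz, hzH⟩ := h.isEar.exists_notMem
  obtain ⟨n, rfl, hn⟩ := mem_support_iff_exists_getVert.1 hz
  rw [hp2] at hn
  interval_cases n
  · exact hzH (by simpa using h.isEar.start_mem)
  · exact hzH <| hH h.isEar.start_mem h.isEar.end_mem (adj_of_length_eq_one hq1).symm
      (by simpa using (p.adj_getVert_succ (i := 0) (by omega)).symm)
      (by simpa [← hp2] using p.adj_getVert_succ (i := 1) (by omega))
  · exact hzH (by simpa [← hp2] using h.isEar.end_mem)

theorem exists_shorter_of_cross_adj (h : p.IsEarCycle H q) (hxp : x ∈ p.support)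
    (hxq : x ∉ q.support) (hyq : y ∈ q.support) (hyp : y ∉ p.support) (hxy : G.Adj x y) :
    ∃ (p' : G.Walk u y) (q' : G.Walk y u), p'.IsEarCycle H q' ∧
      p'.length + q'.length < p.length + q.length := by
  classical
  have hxv : x ≠ v := fun hx => hxq (hx ▸ q.start_mem_support)
  have hyv : y ≠ v := fun hy => hyp (hy ▸ p.end_mem_support)
  have hvp : v ∉ (p.takeUntil x hxp).support :=
    endpoint_notMem_support_takeUntil h.isEar.isPath hxp hxv.symm
  refine ⟨(p.takeUntil x hxp).concat hxy, q.dropUntil y hyq,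
    ⟨⟨?_, h.isEar.start_mem, h.mem y hyq, ⟨x, ?_, h.notMem_of_notMem_right hxp hxq⟩, ?_⟩,
      h.isPath.dropUntil hyq, fun z hz => h.mem z (q.support_dropUntil_subset_support hyq hz)⟩,
    ?_⟩
  · exact (h.isEar.isPath.takeUntil hxp).concat
      (fun hy => hyp (p.support_takeUntil_subset_support hxp hy)) hxy
  · simp [support_concat]
  · intro z hz hzH
    rw [support_concat, List.mem_append, List.mem_singleton] at hz
    rcases hz with hz | rfl
    · rcases h.isEar.eq_or_eq_of_mem z (p.support_takeUntil_subset_support hxp hz) hzH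
        with rfl | rfl
      · exact .inl rfl
      · exact absurd hz hvp
    · exact .inr rfl
  · have := length_takeUntil_lt_length hxp hxv
    have := length_dropUntil_lt_length hyq hyv
    simp only [length_concat]
    omega

theorem exists_shorter (hch : ChordalGraph G) (hH : DeltaConvex G H) (h : p.IsEarCycle H q) :
    ∃ (u' v' : V) (p' : G.Walk u' v') (q' : G.Walk v' u'), p'.IsEarCycle H q' ∧
      p'.length + q'.length < p.length + q.length := by
  obtain ⟨x, y, hx, hy, hxy, he⟩ :=
    hch u _ h.isCycle (by simpa [Nat.succ_le_iff] using h.three_lt_length hH)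
  rw [mem_support_append_iff] at hx hy
  rw [edges_append, List.mem_append, not_or] at he
  by_cases hq : x ∈ q.support ∧ y ∈ q.support
  · obtain ⟨q', hq', hlt, hsub, -⟩ := h.isPath.exists_shortcut hq.1 hq.2 hxy he.2
    exact ⟨u, v, p, q', ⟨h.isEar, hq', fun z hz => h.mem z (hsub hz)⟩, by omega⟩
  by_cases hp : x ∈ p.support ∧ y ∈ p.support
  · obtain ⟨p', hp', hlt, hsub, hxp', hyp'⟩ :=
      h.isEar.isPath.exists_shortcut hp.1 hp.2 hxy he.1
    have hout : ∃ z ∈ p'.support, z ∉ H := by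
      by_cases hxq : x ∈ q.support
      · exact ⟨y, hyp', h.notMem_of_notMem_right hp.2 fun hyq => hq ⟨hxq, hyq⟩⟩
      · exact ⟨x, hxp', h.notMem_of_notMem_right hp.1 hxq⟩
    exact ⟨u, v, p', q, ⟨⟨hp', h.isEar.start_mem, h.isEar.end_mem, hout,
      fun z hz => h.isEar.eq_or_eq_of_mem z (hsub hz)⟩, h.isPath, h.mem⟩, by omega⟩
  have hcross : (x ∈ p.support ∧ x ∉ q.support ∧ y ∈ q.support ∧ y ∉ p.support) ∨
      (y ∈ p.support ∧ y ∉ q.support ∧ x ∈ q.support ∧ x ∉ p.support) := by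
    tauto
  rcases hcross with ⟨hxp, hxq, hyq, hyp⟩ | ⟨hyp, hyq, hxq, hxp⟩
  · obtain ⟨p', q', h', hlt⟩ := h.exists_shorter_of_cross_adj hxp hxq hyq hyp hxy
    exact ⟨u, y, p', q', h', hlt⟩
  · obtain ⟨p', q', h', hlt⟩ := h.exists_shorter_of_cross_adj hyp hyq hxq hxp hxy.symm
    exact ⟨u, x, p', q', h', hlt⟩

end IsEarCycle

end SimpleGraph.Walk

theorem ChordalGraph.not_isEarCycle {G : SimpleGraph V} {H : Set V} (hch : ChordalGraph G)
    (hH : DeltaConvex G H) {u v : V} (p : G.Walk u v) (q : G.Walk v u) :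
    ¬ p.IsEarCycle H q := by
  intro h
  induction hn : p.length + q.length using Nat.strong_induction_on generalizing u v with
  | _ n ih =>
    obtain ⟨u', v', p', q', h', hlt⟩ := h.exists_shorter hch hH
    exact ih _ (hn ▸ hlt) p' q' h' rfl

section DeltaHull

open SimpleGraph

variable {G : SimpleGraph V} {S T : Set V} {u v x y : V}

theorem subset_deltaHull (S : Set V) : S ⊆ deltaHull G S :=
  fun _ hx => Set.mem_sInter.2 fun _ hT => hT.1 hx

theorem deltaConvex_deltaHull (S : Set V) : DeltaConvex G (deltaHull G S) :=
  fun _ _ _ hu hv huv hwu hwv =>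
    Set.mem_sInter.2 fun T hT =>
      hT.2 (Set.mem_sInter.1 hu T hT) (Set.mem_sInter.1 hv T hT) huv hwu hwv

theorem deltaHull_min (hST : S ⊆ T) (hT : DeltaConvex G T) : deltaHull G S ⊆ T :=
  fun _ hx => Set.mem_sInter.1 hx T ⟨hST, hT⟩

theorem exists_walk_support_subset_deltaHull_pair (huv : G.Adj u v)
    (hx : x ∈ deltaHull G {u, v}) :
    ∃ p : G.Walk x u, ∀ z ∈ p.support, z ∈ deltaHull G {u, v} := by
  have hu : u ∈ deltaHull G {u, v} := subset_deltaHull _ (by simp)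
  have hv : v ∈ deltaHull G {u, v} := subset_deltaHull _ (by simp)
  suffices deltaHull G {u, v} ⊆
      {x | ∃ p : G.Walk x u, ∀ z ∈ p.support, z ∈ deltaHull G {u, v}} from this hx
  refine deltaHull_min ?_ ?_
  · rintro _ (rfl | rfl)
    · exact ⟨.nil, by simpa using hu⟩
    · exact ⟨huv.symm.toWalk, by simp [hu, hv]⟩
  · rintro p q w ⟨Wp, hWp⟩ ⟨Wq, hWq⟩ hpq hwp hwq
    have hw := deltaConvex_deltaHull (G := G) _ (hWp p Wp.start_mem_support)
      (hWq q Wq.start_mem_support) hpq hwp hwq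
    exact ⟨.cons hwp Wp, by simpa [hw] using hWp⟩

theorem exists_isPath_support_subset_deltaHull_pair (huv : G.Adj u v)
    (hx : x ∈ deltaHull G {u, v}) (hy : y ∈ deltaHull G {u, v}) :
    ∃ p : G.Walk x y, p.IsPath ∧ ∀ z ∈ p.support, z ∈ deltaHull G {u, v} := by
  classical
  obtain ⟨p, hp⟩ := exists_walk_support_subset_deltaHull_pair huv hx
  obtain ⟨q, hq⟩ := exists_walk_support_subset_deltaHull_pair huv hy
  refine ⟨(p.append q.reverse).bypass, Walk.bypass_isPath _, fun z hz => ?_⟩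
  have := Walk.support_bypass_subset_support _ hz
  rw [Walk.mem_support_append_iff, Walk.support_reverse, List.mem_reverse] at this
  exact this.elim (hp z) (hq z)

end DeltaHull

namespace SimpleGraph

variable {G : SimpleGraph V} {H : Set V} {a u v x y z : V}

theorem exists_walk_notMem_support (h : (G.induce {x | x ≠ a}).Connected) (hx : x ≠ a)
    (hy : y ≠ a) : ∃ p : G.Walk x y, a ∉ p.support := by
  obtain ⟨p⟩ := h.preconnected ⟨x, hx⟩ ⟨y, hy⟩
  have ha : a ∉ (p.map (Embedding.induce {x | x ≠ a}).toHom).support := by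
    rw [Walk.support_map, List.mem_map]
    rintro ⟨⟨b, hb⟩, -, hba⟩
    exact hb hba
  exact ⟨_, ha⟩

theorem exists_isEar (hconn : G.Connected) (hcut : ∀ a, (G.induce {x | x ≠ a}).Connected)
    (hz : z ∉ H) (hu : u ∈ H) (hv : v ∈ H) (huv : u ≠ v) :
    ∃ (a b : V) (p : G.Walk a b), p.IsEar H := by
  classical
  obtain ⟨⟨⟨w, a⟩, hwa⟩, -, hw, ha⟩ :=
    (hconn.preconnected z u).some.exists_boundary_dart Hᶜ hz (by simpa using hu)
  simp only [Set.mem_compl_iff, not_not] at hw ha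
  obtain ⟨t, ht, hta⟩ : ∃ t ∈ H, t ≠ a := by
    by_cases hua : u = a
    · exact ⟨v, hv, hua ▸ huv.symm⟩
    · exact ⟨u, hu, hua⟩
  obtain ⟨W, haW⟩ := exists_walk_notMem_support (hcut a) hwa.ne hta
  obtain ⟨b, hb, q, hsub, hqH⟩ := W.exists_walk_to_first_mem ht
  have haq : a ∉ q.bypass.support :=
    fun h => haW (hsub (q.support_bypass_subset_support h))
  refine ⟨a, b, .cons hwa.symm q.bypass,
    ⟨q.bypass_isPath.cons haq, ha, hb, ⟨w, by simp, hw⟩, ?_⟩⟩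
  intro z hz hzH
  rw [Walk.support_cons, List.mem_cons] at hz
  exact hz.imp id fun hz => hqH z (q.support_bypass_subset_support hz) hzH

end SimpleGraph

theorem stmt_0_general {V : Type*} (G : SimpleGraph V)
    (h2 : TwoConnected G) (hch : ChordalGraph G) :
    ∀ u v : V, G.Adj u v → deltaHull G {u, v} = Set.univ := by
  intro u v huv
  refine Set.eq_univ_of_forall fun z => ?_
  by_contra hz
  obtain ⟨a, b, p, hp⟩ := SimpleGraph.exists_isEar h2.2.1 h2.2.2 hz
    (subset_deltaHull _ (by simp)) (subset_deltaHull _ (by simp)) huv.ne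
  obtain ⟨q, hq, hqH⟩ :=
    exists_isPath_support_subset_deltaHull_pair huv hp.end_mem hp.start_mem
  exact hch.not_isEarCycle (deltaConvex_deltaHull _) p q ⟨hp, hq, hqH⟩

/-- In a finite simple connected, 2-connected, chordal graph, every pair of
adjacent vertices forms a hull set: the Δ-convex hull of `{u, v}` is the whole vertex set. -/
theorem stmt_0 {V : Type*} [Fintype V] (G : SimpleGraph V) (hconn : G.Connected)
    (h2 : TwoConnected G) (hch : ChordalGraph G) :
    ∀ u v : V, G.Adj u v → deltaHull G {u, v} = Set.univ :=
  stmt_0_general G h2 hch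
end

section
/- Let G be a finite simple connected graph with exactly k triangles (3-element sets of pairwise adjacent vertices), and let m be the number of vertices of G that lie on no triangle. Then the Helly number of G with respect to Δ-convexity satisfies h_Δ(G) ≤ m + 2k. -/
variable {V : Type*}

/-- If a finite simple connected graph `G` has exactly `k` triangles and `m`
vertices lying on no triangle, then `h_Δ(G) ≤ m + 2k`. -/
theorem stmt_6 {V : Type*} [Fintype V] (G : SimpleGraph V) (hconn : G.Connected)
    (k m : ℕ)
    (hk : {t : Finset V | G.IsNClique 3 t}.ncard = k)
    (hm : {v : V | ∀ t : Finset V, G.IsNClique 3 t → v ∉ t}.ncard = m) :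
    hellyNumber G ≤ m + 2 * k := by
  classical
  refine csSup_le' ?_
  rintro n ⟨S, hS, rfl⟩
  -- No triangle is contained in a Helly independent set
  have htri : ∀ t : Finset V, G.IsNClique 3 t → ¬ (↑t ⊆ S) := by
    intro t ht hts
    obtain ⟨a, b, c, hab, hac, hbc, rfl⟩ := Finset.card_eq_three.mp ht.card_eq
    have hadj_ab : G.Adj a b := ht.isClique (by simp) (by simp) hab
    have hadj_ac : G.Adj a c := ht.isClique (by simp) (by simp) hac
    have hadj_bc : G.Adj b c := ht.isClique (by simp) (by simp) hbc
    have haS : a ∈ S := hts (by simp)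
    have hbS : b ∈ S := hts (by simp)
    have hcS : c ∈ S := hts (by simp)
    have hmem : a ∈ (⋂ x ∈ S, deltaHull G (S \ {x})) := by
      refine Set.mem_iInter₂.mpr fun x hx => ?_
      by_cases hax : a = x
      · subst hax
        intro U hU
        obtain ⟨hsub, hconv⟩ := hU
        exact hconv (hsub ⟨hbS, by simp [Ne.symm hab]⟩)
          (hsub ⟨hcS, by simp [Ne.symm hac]⟩) hadj_bc hadj_ab hadj_ac
      · intro U hU
        exact hU.1 ⟨haS, by simp [hax]⟩
    rw [HellyIndep] at hS
    rw [hS] at hmem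
    exact hmem
  set M : Set V := {v : V | ∀ t : Finset V, G.IsNClique 3 t → v ∉ t} with hMdef
  have hSfin : S.Finite := Set.toFinite S
  have hsplit : (S ∩ M).ncard + (S \ M).ncard = S.ncard :=
    Set.ncard_inter_add_ncard_diff_eq_ncard S M hSfin
  have h1 : (S ∩ M).ncard ≤ m := by
    rw [← hm]
    exact Set.ncard_le_ncard Set.inter_subset_right (Set.toFinite M)
  -- Finset versions
  set 𝒯 : Finset (Finset V) := {t : Finset V | G.IsNClique 3 t}.toFinset with h𝒯def
  have h𝒯card : 𝒯.card = k := by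
    rw [h𝒯def, ← hk, Set.ncard_eq_toFinset_card']
  have h2 : (S \ M).ncard ≤ 2 * k := by
    have hsub : (S \ M).toFinset ⊆ 𝒯.biUnion (fun t => S.toFinset ∩ t) := by
      intro v hv
      rw [Set.mem_toFinset, Set.mem_diff] at hv
      obtain ⟨hvS, hvM⟩ := hv
      simp only [hMdef, Set.mem_setOf_eq, not_forall] at hvM
      obtain ⟨t, ht, hvt⟩ := hvM
      rw [not_not] at hvt
      refine Finset.mem_biUnion.mpr ⟨t, ?_, ?_⟩
      · rw [h𝒯def, Set.mem_toFinset]; exact ht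
      · exact Finset.mem_inter.mpr ⟨Set.mem_toFinset.mpr hvS, hvt⟩
    have hcard2 : ∀ t ∈ 𝒯, (S.toFinset ∩ t).card ≤ 2 := by
      intro t ht
      rw [h𝒯def, Set.mem_toFinset] at ht
      have hn := htri t ht
      have : ∃ x ∈ t, x ∉ S := by
        by_contra hcon
        push_neg at hcon
        exact hn fun x hx => hcon x hx
      obtain ⟨x, hxt, hxS⟩ := this
      have hsub2 : S.toFinset ∩ t ⊆ t.erase x := by
        intro y hy
        rw [Finset.mem_inter] at hy
        refine Finset.mem_erase.mpr ⟨?_, hy.2⟩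
        rintro rfl
        exact hxS (Set.mem_toFinset.mp hy.1)
      calc (S.toFinset ∩ t).card ≤ (t.erase x).card := Finset.card_le_card hsub2
        _ = t.card - 1 := Finset.card_erase_of_mem hxt
        _ = 2 := by rw [ht.card_eq]
    calc (S \ M).ncard = (S \ M).toFinset.card := Set.ncard_eq_toFinset_card' _
      _ ≤ (𝒯.biUnion (fun t => S.toFinset ∩ t)).card := Finset.card_le_card hsub
      _ ≤ ∑ t ∈ 𝒯, (S.toFinset ∩ t).card := Finset.card_biUnion_le
      _ ≤ ∑ _t ∈ 𝒯, 2 := Finset.sum_le_sum hcard2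
      _ = 2 * k := by rw [Finset.sum_const, h𝒯card, smul_eq_mul, Nat.mul_comm]
  omega
end

section
/- For every natural number n > 1, there exists a finite simple connected graph G whose Helly number with respect to Δ-convexity satisfies h_Δ(G) = n. -/
variable {V : Type*}

lemma hull_eq_of_triangle_free {V : Type*} (G : SimpleGraph V)
    (hT : ∀ u v w : V, G.Adj u v → G.Adj w u → G.Adj w v → False) (S : Set V) :
    deltaHull G S = S := by
  apply subset_antisymm
  · exact Set.sInter_subset_of_mem ⟨subset_rfl, fun u v w hu hv huv hwu hwv =>
      absurd (hT u v w huv hwu hwv) (not_false)⟩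
  · exact fun x hx T hT' => hT'.1 hx

/-- For every natural number `n > 1`, there is a finite simple connected graph
whose Helly number w.r.t. Δ-convexity is `n`. -/
theorem stmt_7 (n : ℕ) (hn : 1 < n) :
    ∃ (V : Type) (_ : Fintype V) (G : SimpleGraph V),
      G.Connected ∧ hellyNumber G = n := by
  obtain ⟨m, rfl⟩ : ∃ m, n = m + 1 := ⟨n - 1, by omega⟩
  refine ⟨Fin (m + 1), inferInstance, SimpleGraph.pathGraph (m + 1),
    SimpleGraph.pathGraph_connected m, ?_⟩
  have hT : ∀ u v w : Fin (m + 1), (SimpleGraph.pathGraph (m + 1)).Adj u v →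
      (SimpleGraph.pathGraph (m + 1)).Adj w u → (SimpleGraph.pathGraph (m + 1)).Adj w v →
      False := by
    intro u v w h1 h2 h3
    rw [SimpleGraph.pathGraph_adj] at h1 h2 h3
    omega
  have hhull := hull_eq_of_triangle_free _ hT
  -- HellyIndep S ↔ S.Nonempty
  have hHI : ∀ S : Set (Fin (m + 1)), HellyIndep (SimpleGraph.pathGraph (m + 1)) S ↔ S.Nonempty := by
    intro S
    unfold HellyIndep
    constructor
    · intro h
      by_contra hne
      rw [Set.not_nonempty_iff_eq_empty] at hne
      subst hne
      simp at h
    · intro ⟨x, hx⟩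
      ext y
      simp only [Set.mem_iInter, Set.mem_empty_iff_false, iff_false]
      intro h
      have h1 := h x hx
      rw [hhull] at h1
      have h2 := h y (h1.1)
      rw [hhull] at h2
      exact h2.2 rfl
  unfold hellyNumber
  apply le_antisymm
  · apply csSup_le
    · exact ⟨m + 1, Set.univ, (hHI _).mpr ⟨0, trivial⟩, by simp [Set.ncard_univ]⟩
    · rintro k ⟨S, _, rfl⟩
      simpa [Set.ncard_univ] using Set.ncard_le_ncard (Set.subset_univ S) Set.finite_univ
  · apply le_csSup
    · refine ⟨m + 1, ?_⟩
      rintro k ⟨S, _, rfl⟩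
      simpa [Set.ncard_univ] using Set.ncard_le_ncard (Set.subset_univ S) Set.finite_univ
    · exact ⟨Set.univ, (hHI _).mpr ⟨0, trivial⟩, by simp [Set.ncard_univ]⟩
end

section
/- Let G be a finite simple connected block graph (every block of G is a complete graph) with exactly ℓ blocks. Then the Helly number of G with respect to Δ-convexity satisfies h_Δ(G) = ℓ + 1. -/
variable {V : Type*}

/-!
Every triangle of `G` lies in a block and blocks are cliques, so a set is Δ-convex iff it contains
each block it meets in two vertices: the Δ-hull only depends on the family of blocks. The blocks of
a connected graph form a tree: they can be attached one at a time, each meeting the union of the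
earlier ones in a single cut vertex `x` (two common vertices, together with a shortest chain of
earlier blocks between them, would span a larger set without cut vertex).

Induct along this order, `B` being the last block and `x` its attaching vertex. For the upper
bound: if `S` meets `B` in three vertices, all of `B` lies in every hull `⟨S - a⟩`; if in at most
one, drop it; if in exactly two, replace them by `x`. Either way one vertex is lost against one
block. For the lower bound, adding a vertex of `B - x` to a Helly independent set of the smaller
tree keeps it Helly independent, because away from `B` the hulls do not grow.
-/

open SimpleGraph

section BlockConvexity

variable {ℬ ℬ' : Set (Set V)} {B S S' P Q T : Set V} {x : V}

def BlockConvex (ℬ : Set (Set V)) (T : Set V) : Prop :=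
  ∀ B ∈ ℬ, (B ∩ T).Nontrivial → B ⊆ T

def blockHull (ℬ : Set (Set V)) (S : Set V) : Set V :=
  ⋂₀ {T | S ⊆ T ∧ BlockConvex ℬ T}

lemma subset_blockHull : S ⊆ blockHull ℬ S :=
  fun _ hx _ hT => hT.1 hx

lemma blockConvex_blockHull : BlockConvex ℬ (blockHull ℬ S) := by
  rintro B hB ⟨u, hu, v, hv, huv⟩ w hw T hT
  exact hT.2 B hB ⟨u, ⟨hu.1, hu.2 T hT⟩, v, ⟨hv.1, hv.2 T hT⟩, huv⟩ hw

lemma blockHull_subset (hST : S ⊆ T) (hT : BlockConvex ℬ T) : blockHull ℬ S ⊆ T :=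
  fun _ hx => hx T ⟨hST, hT⟩

lemma blockHull_subset_blockHull (h : P ⊆ blockHull ℬ Q) : blockHull ℬ P ⊆ blockHull ℬ Q :=
  blockHull_subset h blockConvex_blockHull

lemma blockHull_mono_left (h : ℬ ⊆ ℬ') : blockHull ℬ S ⊆ blockHull ℬ' S :=
  blockHull_subset subset_blockHull fun B hB => blockConvex_blockHull B (h hB)

lemma subset_blockHull_of_nontrivial (hB : B ∈ ℬ) (h : (B ∩ S).Nontrivial) :
    B ⊆ blockHull ℬ S :=
  blockConvex_blockHull B hB (h.mono (Set.inter_subset_inter_right _ subset_blockHull))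

lemma blockConvex_of_subsingleton (h : T.Subsingleton) : BlockConvex ℬ T :=
  fun _ _ hBT => absurd (h.anti Set.inter_subset_right) hBT.not_subsingleton

lemma blockConvex_sUnion : BlockConvex ℬ (⋃₀ ℬ) :=
  fun _ hB _ => Set.subset_sUnion_of_mem hB

def hellyCore (ℬ : Set (Set V)) (S : Set V) : Set V :=
  ⋂ a ∈ S, blockHull ℬ (S \ {a})

lemma hellyCore_singleton (v : V) : hellyCore ℬ {v} = ∅ := by
  simp only [hellyCore, Set.mem_singleton_iff, Set.iInter_iInter_eq_left, sdiff_self]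
  exact Set.subset_empty_iff.1
    (blockHull_subset subset_rfl (blockConvex_of_subsingleton Set.subsingleton_empty))

lemma hellyCore_subset_hellyCore (hℬ : ℬ ⊆ ℬ')
    (h : ∀ a ∈ S, ∃ a' ∈ S', S' \ {a'} ⊆ blockHull ℬ' (S \ {a})) :
    hellyCore ℬ S' ⊆ hellyCore ℬ' S := by
  intro p hp
  simp only [hellyCore, Set.mem_iInter₂] at hp ⊢
  intro a ha
  obtain ⟨a', ha', hsub⟩ := h a ha
  exact blockHull_subset_blockHull hsub (blockHull_mono_left hℬ (hp a' ha'))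

lemma hellyCore_subset_of_subset (hℬ : ℬ ⊆ ℬ') (hS : S' ⊆ S) (hS' : S'.Nonempty) :
    hellyCore ℬ S' ⊆ hellyCore ℬ' S := by
  refine hellyCore_subset_hellyCore hℬ fun a ha => ?_
  by_cases haS' : a ∈ S'
  · exact ⟨a, haS', (Set.sdiff_subset_sdiff_left hS).trans subset_blockHull⟩
  · obtain ⟨a', ha'⟩ := hS'
    exact ⟨a', ha', Set.sdiff_subset.trans
      (fun b hb => subset_blockHull ⟨hS hb, fun h => haS' (h ▸ hb)⟩)⟩

lemma subset_hellyCore (hB : B ∈ ℬ) (h : 2 < (B ∩ S).ncard) : B ⊆ hellyCore ℬ S := by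
  refine Set.subset_iInter₂ fun a _ => subset_blockHull_of_nontrivial hB ?_
  have h' : 1 < ((B ∩ S) \ {a}).ncard := by
    have := Set.pred_ncard_le_ncard_sdiff_singleton (B ∩ S) a
    omega
  rw [Set.inter_sdiff_assoc] at h'
  exact (Set.one_lt_ncard_iff_nontrivial_and_finite.1 h').1

lemma hellyCore_insert_sdiff_subset (hℬ : ℬ ⊆ ℬ') (hB : B ∈ ℬ') (hxB : x ∈ B) (hxS : x ∉ S)
    (hBS : (B ∩ S).Nontrivial) : hellyCore ℬ (insert x (S \ B)) ⊆ hellyCore ℬ' S := by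
  refine hellyCore_subset_hellyCore hℬ fun a ha => ?_
  by_cases haB : a ∈ B
  · refine ⟨x, .inl rfl, ?_⟩
    rw [Set.insert_sdiff_self_of_notMem (fun h => h.2 hxB)]
    exact (Set.sdiff_subset_sdiff_right (Set.singleton_subset_iff.2 haB)).trans subset_blockHull
  · refine ⟨a, .inr ⟨ha, haB⟩, ?_⟩
    have hBa : B ⊆ blockHull ℬ' (S \ {a}) := subset_blockHull_of_nontrivial hB
      (hBS.mono fun y ⟨hyB, hyS⟩ => ⟨hyB, hyS, fun h => haB (h ▸ hyB)⟩)
    rintro y ⟨rfl | ⟨hyS, -⟩, hya⟩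
    exacts [hBa hxB, subset_blockHull ⟨hyS, hya⟩]

end BlockConvexity

/-- Families obtained from one set by repeatedly attaching a new leaf `B` at a single element `x`
of the union so far, as the blocks of a connected graph are attached at cut vertices. -/
inductive IsBlockTree : Set (Set V) → Prop
  | singleton {B : Set V} (hB : 2 ≤ B.ncard) : IsBlockTree {B}
  | attach {ℬ : Set (Set V)} {B : Set V} {x : V} (hℬ : IsBlockTree ℬ) (hB : 2 ≤ B.ncard)
      (hx : B ∩ ⋃₀ ℬ = {x}) : IsBlockTree (insert B ℬ)

section Leaf

variable {ℬ : Set (Set V)} {B P : Set V} {s x : V}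

lemma blockConvex_insert_sUnion (hx : B ∩ ⋃₀ ℬ = {x}) : BlockConvex (insert B ℬ) (⋃₀ ℬ) := by
  rintro C (rfl | hC) hCℬ
  · rw [hx] at hCℬ
    exact absurd hCℬ Set.not_nontrivial_singleton
  · exact Set.subset_sUnion_of_mem hC

lemma blockHull_insert_inter_sUnion_subset (hx : B ∩ ⋃₀ ℬ = {x}) (hs : s ∈ B) (hsx : s ≠ x)
    (hP : P ⊆ ⋃₀ ℬ) : blockHull (insert B ℬ) (insert s P) ∩ ⋃₀ ℬ ⊆ blockHull ℬ P := by
  have hBℬ : ∀ C ∈ ℬ, ∀ y ∈ B, y ∈ C → y = x := fun C hC y hyB hyC => hx.le ⟨hyB, C, hC, hyC⟩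
  have hsℬ : s ∉ ⋃₀ ℬ := fun ⟨C, hC, hsC⟩ => hsx (hBℬ C hC s hs hsC)
  by_cases hxP : x ∈ blockHull ℬ P
  · have hconv : BlockConvex (insert B ℬ) (blockHull ℬ P ∪ B) := by
      rintro C (rfl | hC) hCT
      · exact Set.subset_union_right
      · refine (blockConvex_blockHull C hC (hCT.mono ?_)).trans Set.subset_union_left
        rintro y ⟨hyC, hy | hyB⟩
        exacts [⟨hyC, hy⟩, ⟨hyC, hBℬ C hC y hyB hyC ▸ hxP⟩]
    rintro p ⟨hp, C, hC, hpC⟩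
    rcases blockHull_subset (Set.insert_subset (.inr hs) (subset_blockHull.trans
      Set.subset_union_left)) hconv hp with hp | hpB
    · exact hp
    · exact hBℬ C hC p hpB hpC ▸ hxP
  · have hPℬ : blockHull ℬ P ⊆ ⋃₀ ℬ := blockHull_subset hP blockConvex_sUnion
    have hconv : BlockConvex (insert B ℬ) (insert s (blockHull ℬ P)) := by
      rintro C (rfl | hC) hCT
      · refine absurd (hCT.mono fun y ⟨hyC, hy⟩ => ?_) (Set.not_nontrivial_singleton (x := s))
        rcases hy with rfl | hy
        · rfl
        · obtain ⟨D, hD, hyD⟩ := hPℬ hy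
          exact absurd (hBℬ D hD y hyC hyD ▸ hy) hxP
      · have hsC : s ∉ C := fun hsC => hsℬ ⟨C, hC, hsC⟩
        refine (blockConvex_blockHull C hC (hCT.mono ?_)).trans (Set.subset_insert _ _)
        rintro y ⟨hyC, rfl | hy⟩
        exacts [absurd hyC hsC, ⟨hyC, hy⟩]
    rintro p ⟨hp, hpℬ⟩
    rcases blockHull_subset (Set.insert_subset_insert subset_blockHull) hconv hp with rfl | hp
    · exact absurd hpℬ hsℬ
    · exact hp

end Leaf

namespace IsBlockTree

variable {ℬ : Set (Set V)} {B S : Set V} {x : V}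

lemma finite (hℬ : IsBlockTree ℬ) : ℬ.Finite := by
  induction hℬ with
  | singleton => exact Set.finite_singleton _
  | attach _ _ _ ih => exact ih.insert _

lemma ncard_insert (hℬ : IsBlockTree ℬ) (hB : 2 ≤ B.ncard) (hx : B ∩ ⋃₀ ℬ = {x}) :
    (insert B ℬ).ncard = ℬ.ncard + 1 := by
  refine Set.ncard_insert_of_notMem (fun hBℬ => ?_) hℬ.finite
  rw [Set.inter_eq_left.2 (Set.subset_sUnion_of_mem hBℬ)] at hx
  simp [hx] at hB

lemma sUnion_nonempty (hℬ : IsBlockTree ℬ) : (⋃₀ ℬ).Nonempty := by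
  cases hℬ with
  | singleton hB => simpa using Set.nonempty_of_ncard_ne_zero (by omega : _ ≠ 0)
  | @attach _ _ x _ _ hx => exact ⟨x, Set.sUnion_mono (Set.subset_insert _ _) (hx.ge rfl).2⟩

theorem exists_hellyCore_eq_empty (hℬ : IsBlockTree ℬ) :
    ∃ S ⊆ ⋃₀ ℬ, S.ncard = ℬ.ncard + 1 ∧ hellyCore ℬ S = ∅ := by
  induction hℬ with
  | @singleton B hB =>
    obtain ⟨u, v, hu, hv, huv⟩ :=
      (Set.one_lt_ncard_iff (Set.finite_of_ncard_pos (by omega))).1 hB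
    refine ⟨{u, v}, by simp [Set.insert_subset_iff, hu, hv], by simp [Set.ncard_pair huv], ?_⟩
    have hhull : ∀ a b : V, blockHull {B} ({a, b} \ {a}) ⊆ {b} := fun a b =>
      blockHull_subset (fun y ⟨hy, hya⟩ => hy.resolve_left hya)
        (blockConvex_of_subsingleton Set.subsingleton_singleton)
    refine Set.eq_empty_of_forall_notMem fun p hp => huv ?_
    have hpv := hhull u v (Set.mem_iInter₂.1 hp u (.inl rfl))
    have hpu := hhull v u (by rw [Set.pair_comm]; exact Set.mem_iInter₂.1 hp v (.inr rfl))
    exact hpu.symm.trans hpv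
  | @attach ℬ B x hℬ hB hx ih =>
    obtain ⟨S, hSℬ, hScard, hS⟩ := ih
    obtain ⟨s, hs, hsx⟩ := Set.exists_ne_of_one_lt_ncard hB x
    have hsℬ : s ∉ ⋃₀ ℬ := fun h => hsx (hx.le ⟨hs, h⟩)
    have hsS : s ∉ S := fun h => hsℬ (hSℬ h)
    refine ⟨insert s S, Set.insert_subset ⟨B, .inl rfl, hs⟩ (hSℬ.trans (Set.sUnion_mono
      (Set.subset_insert _ _))), ?_, ?_⟩
    · rw [Set.ncard_insert_of_notMem hsS (Set.finite_of_ncard_pos (by omega)), hScard,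
        hℬ.ncard_insert hB hx]
    refine Set.eq_empty_of_forall_notMem fun p hp => ?_
    simp only [hellyCore, Set.mem_iInter₂] at hp
    have hpℬ : p ∈ ⋃₀ ℬ := blockHull_subset hSℬ (blockConvex_insert_sUnion hx)
      (by simpa [Set.insert_sdiff_self_of_notMem hsS] using hp s (.inl rfl))
    refine hS.subset (Set.mem_iInter₂.2 fun a ha => blockHull_insert_inter_sUnion_subset hx hs hsx
      (Set.sdiff_subset.trans hSℬ) ⟨?_, hpℬ⟩)
    simpa [Set.insert_sdiff_of_notMem _ (show s ∉ {a} from fun h => hsS (h ▸ ha))] using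
      hp a (.inr ha)

theorem hellyCore_nonempty (hℬ : IsBlockTree ℬ) (hS : S ⊆ ⋃₀ ℬ)
    (hcard : ℬ.ncard + 2 ≤ S.ncard) : (hellyCore ℬ S).Nonempty := by
  induction hℬ generalizing S with
  | @singleton B hB =>
    rw [Set.sUnion_singleton] at hS
    rw [Set.ncard_singleton] at hcard
    obtain ⟨p, hp⟩ := Set.nonempty_of_ncard_ne_zero (by omega : S.ncard ≠ 0)
    exact ⟨p, subset_hellyCore (Set.mem_singleton B) (by rwa [Set.inter_eq_right.2 hS]) (hS hp)⟩
  | @attach ℬ B x hℬ hB hx ih =>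
    rw [hℬ.ncard_insert hB hx] at hcard
    rw [Set.sUnion_insert] at hS
    have hSfin : S.Finite := Set.finite_of_ncard_pos (by omega)
    have hxBℬ : x ∈ B ∩ ⋃₀ ℬ := hx.ge rfl
    have hSBℬ : S \ B ⊆ ⋃₀ ℬ := fun y ⟨hyS, hyB⟩ => (hS hyS).resolve_left hyB
    have hSB := Set.ncard_inter_add_ncard_sdiff_eq_ncard S B hSfin
    rw [Set.inter_comm] at hSB
    obtain hSB1 | hSB2 | hSB3 : (B ∩ S).ncard ≤ 1 ∨ (B ∩ S).ncard = 2 ∨ 2 < (B ∩ S).ncard := by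
      omega
    · obtain ⟨p, hp⟩ := ih hSBℬ (by omega)
      exact ⟨p, hellyCore_subset_of_subset (Set.subset_insert _ _) Set.sdiff_subset
        (Set.nonempty_of_ncard_ne_zero (by omega)) hp⟩
    · -- trade the two vertices of `S` in `B` for the attaching vertex `x`
      obtain ⟨p, hp⟩ := ih (Set.insert_subset hxBℬ.2 hSBℬ) (by
        rw [Set.ncard_insert_of_notMem (fun h => h.2 hxBℬ.1) (hSfin.subset Set.sdiff_subset)]
        omega)
      refine ⟨p, ?_⟩
      by_cases hxS : x ∈ S
      · exact hellyCore_subset_of_subset (Set.subset_insert _ _)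
          (Set.insert_subset hxS Set.sdiff_subset) ⟨x, .inl rfl⟩ hp
      · exact hellyCore_insert_sdiff_subset (Set.subset_insert _ _) (Set.mem_insert _ _) hxBℬ.1
          hxS (Set.one_lt_ncard_iff_nontrivial_and_finite.1 (by omega)).1 hp
    · obtain ⟨p, hp⟩ := Set.nonempty_of_ncard_ne_zero (by omega : (B ∩ S).ncard ≠ 0)
      exact ⟨p, subset_hellyCore (Set.mem_insert _ _) hSB3 hp.1⟩

end IsBlockTree

section Graph

variable {G : SimpleGraph V} {s t X Y C : Set V} {a b u v w x y : V}

lemma connected_induce_singleton (v : V) : (G.induce {v}).Connected := by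
  rw [induce_singleton_eq_top]
  exact connected_top

/-- Reachability inside `G.induce s`, phrased without subtypes. -/
def ReachableIn (G : SimpleGraph V) (s : Set V) (u v : V) : Prop :=
  ∃ t ⊆ s, u ∈ t ∧ v ∈ t ∧ (G.induce t).Connected

namespace ReachableIn

lemma refl (hu : u ∈ s) : ReachableIn G s u u :=
  ⟨{u}, Set.singleton_subset_iff.2 hu, rfl, rfl, connected_induce_singleton u⟩

lemma symm (h : ReachableIn G s u v) : ReachableIn G s v u :=
  let ⟨t, hts, hu, hv, ht⟩ := h
  ⟨t, hts, hv, hu, ht⟩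

lemma trans (h₁ : ReachableIn G s u v) (h₂ : ReachableIn G s v w) : ReachableIn G s u w := by
  obtain ⟨t₁, ht₁s, hu, hv₁, ht₁⟩ := h₁
  obtain ⟨t₂, ht₂s, hv₂, hw, ht₂⟩ := h₂
  exact ⟨t₁ ∪ t₂, Set.union_subset ht₁s ht₂s, .inl hu, .inr hw,
    induce_union_connected ht₁.preconnected ht₂.preconnected ⟨v, hv₁, hv₂⟩⟩

lemma mono (h : ReachableIn G s u v) (hst : s ⊆ t) : ReachableIn G t u v :=
  let ⟨r, hrs, hu, hv, hr⟩ := h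
  ⟨r, hrs.trans hst, hu, hv, hr⟩

lemma mem_left (h : ReachableIn G s u v) : u ∈ s :=
  let ⟨_, hts, hu, _⟩ := h
  hts hu

end ReachableIn

lemma SimpleGraph.Connected.reachableIn (h : (G.induce s).Connected) (hu : u ∈ s) (hv : v ∈ s) :
    ReachableIn G s u v :=
  ⟨s, subset_rfl, hu, hv, h⟩

lemma connected_induce_of_reachableIn (hu : u ∈ s) (h : ∀ v ∈ s, ReachableIn G s u v) :
    (G.induce s).Connected :=
  induce_connected_of_patches u hu fun hv =>
    let ⟨t, hts, hut, hvt, ht⟩ := h _ hv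
    ⟨t, hts, hut, hvt, ht _ _⟩

lemma NoCutSet.connected_diff (hX : NoCutSet G X) (v : V) : (G.induce (X \ {v})).Connected := by
  by_cases hv : v ∈ X
  · exact hX.2.2 v hv
  · rw [Set.sdiff_singleton_eq_self hv]
    exact hX.2.1

/-- After deleting any vertex `v`, every other vertex of `Y` is still joined inside `Y - v` to an
end of `Y` other than `v`, as for a chain of 2-connected sets leading from `a` to `b`. -/
def IsEar (G : SimpleGraph V) (Y : Set V) (a b : V) : Prop :=
  ReachableIn G Y a b ∧ ∀ v, ∀ w ∈ Y \ {v},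
    (a ≠ v ∧ ReachableIn G (Y \ {v}) w a) ∨ (b ≠ v ∧ ReachableIn G (Y \ {v}) w b)

lemma isEar_singleton (y : V) : IsEar G {y} y y := by
  refine ⟨.refl rfl, fun v w hw => .inl ⟨?_, ?_⟩⟩ <;> obtain ⟨rfl, hwv⟩ := hw
  · exact hwv
  · exact .refl ⟨rfl, hwv⟩

lemma IsEar.reachableIn (hY : IsEar G Y a b) (hw : w ∈ Y) : ReachableIn G Y w a := by
  by_cases hwb : w = b
  · exact hwb ▸ hY.1.symm
  · rcases hY.2 b w ⟨hw, hwb⟩ with ⟨-, h⟩ | ⟨h, -⟩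
    · exact h.mono Set.sdiff_subset
    · exact absurd rfl h

lemma IsEar.attach (hY : IsEar G Y b y) (hC : NoCutSet G C) (ha : a ∈ C) (hb : b ∈ C)
    (haY : a ∉ Y) : IsEar G (C ∪ Y) a y := by
  have hbY : b ∈ Y := hY.1.mem_left
  have hYa : Y ⊆ (C ∪ Y) \ {a} := fun u hu => ⟨.inr hu, fun h => haY (h ▸ hu)⟩
  have hC' : ∀ v, C \ {v} ⊆ (C ∪ Y) \ {v} := fun _ =>
    Set.sdiff_subset_sdiff_left Set.subset_union_left
  have hY' : ∀ v, Y \ {v} ⊆ (C ∪ Y) \ {v} := fun _ =>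
    Set.sdiff_subset_sdiff_left Set.subset_union_right
  refine ⟨((hC.2.1.reachableIn ha hb).mono Set.subset_union_left).trans
    (hY.1.mono Set.subset_union_right), fun v w hw => ?_⟩
  rcases eq_or_ne a v with rfl | hav
  · refine .inr ⟨fun h => haY (h ▸ hY.1.symm.mem_left), ?_⟩
    have hbY' : ReachableIn G ((C ∪ Y) \ {a}) b y := hY.1.mono hYa
    rcases hw with ⟨hwC | hwY, hwa⟩
    · exact (((hC.connected_diff a).reachableIn ⟨hwC, hwa⟩
        ⟨hb, fun h => haY (h ▸ hbY)⟩).mono (hC' a)).trans hbY'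
    · rcases hY.2 a w ⟨hwY, hwa⟩ with ⟨-, h⟩ | ⟨-, h⟩
      · exact (h.mono (hY' a)).trans hbY'
      · exact h.mono (hY' a)
  · have hCv := hC.connected_diff v
    rcases hw with ⟨hwC | hwY, hwv⟩
    · exact .inl ⟨hav, (hCv.reachableIn ⟨hwC, hwv⟩ ⟨ha, hav⟩).mono (hC' v)⟩
    · rcases hY.2 v w ⟨hwY, hwv⟩ with ⟨hbv, h⟩ | ⟨hyv, h⟩
      · exact .inl ⟨hav, (h.mono (hY' v)).trans
          ((hCv.reachableIn ⟨hb, hbv⟩ ⟨ha, hav⟩).mono (hC' v))⟩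
      · exact .inr ⟨hyv, h.mono (hY' v)⟩

lemma NoCutSet.union_of_isEar [Finite V] (hX : NoCutSet G X) (ha : a ∈ X) (hb : b ∈ X)
    (hab : a ≠ b) (hY : IsEar G Y a b) : NoCutSet G (X ∪ Y) := by
  refine ⟨hX.1.trans (Set.ncard_le_ncard Set.subset_union_left), ?_, fun v _ => ?_⟩
  · refine connected_induce_of_reachableIn (.inl ha) fun w hw => ?_
    rcases hw with hw | hw
    · exact (hX.2.1.reachableIn ha hw).mono Set.subset_union_left
    · exact ((hY.reachableIn hw).mono Set.subset_union_right).symm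
  obtain ⟨c, hcX, hcv⟩ : ∃ c ∈ X, c ≠ v := by
    rcases eq_or_ne a v with rfl | hav
    exacts [⟨b, hb, hab.symm⟩, ⟨a, ha, hav⟩]
  have hX' : ∀ d ∈ X, d ≠ v → ReachableIn G ((X ∪ Y) \ {v}) c d := fun d hd hdv =>
    ((hX.connected_diff v).reachableIn ⟨hcX, hcv⟩ ⟨hd, hdv⟩).mono
      (Set.sdiff_subset_sdiff_left Set.subset_union_left)
  have hY' : Y \ {v} ⊆ (X ∪ Y) \ {v} := Set.sdiff_subset_sdiff_left Set.subset_union_right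
  refine connected_induce_of_reachableIn ⟨.inl hcX, hcv⟩ fun w ⟨hw, hwv⟩ => ?_
  rcases hw with hw | hw
  · exact hX' w hw hwv
  · rcases hY.2 v w ⟨hw, hwv⟩ with ⟨hav, h⟩ | ⟨hbv, h⟩
    · exact (hX' a ha hav).trans (h.mono hY').symm
    · exact (hX' b hb hbv).trans (h.mono hY').symm

lemma noCutSet_pair (h : G.Adj u v) : NoCutSet G {u, v} := by
  refine ⟨(Set.ncard_pair h.ne).ge, induce_pair_connected_of_adj h, fun w hw => ?_⟩
  obtain rfl | rfl := hw
  · rw [Set.insert_sdiff_self_of_notMem (by simp [h.ne])]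
    exact connected_induce_singleton v
  · rw [Set.pair_comm, Set.insert_sdiff_self_of_notMem (by simp [h.ne'])]
    exact connected_induce_singleton u

lemma exists_isBlock_superset [Finite V] (hC : NoCutSet G C) : ∃ B, IsBlock G B ∧ C ⊆ B := by
  obtain ⟨B, hB⟩ := (Set.toFinite {B | NoCutSet G B ∧ C ⊆ B}).exists_maximal ⟨C, hC, subset_rfl⟩
  exact ⟨B, ⟨hB.prop.1, fun B' hB' hBB' => hB.eq_of_subset ⟨hB', hB.prop.2.trans hBB'⟩ hBB'⟩,
    hB.prop.2⟩

lemma SimpleGraph.Adj.exists_isBlock [Finite V] (h : G.Adj u v) :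
    ∃ B, IsBlock G B ∧ u ∈ B ∧ v ∈ B :=
  let ⟨B, hB, huvB⟩ := exists_isBlock_superset (noCutSet_pair h)
  ⟨B, hB, huvB (.inl rfl), huvB (.inr rfl)⟩

lemma exists_isBlock_of_triangle [Finite V] (huv : G.Adj u v) (hvw : G.Adj v w)
    (hwu : G.Adj w u) : ∃ B, IsBlock G B ∧ u ∈ B ∧ v ∈ B ∧ w ∈ B := by
  have hear : IsEar G ({u, w} ∪ ({w, v} ∪ {v})) u v :=
    ((isEar_singleton v).attach (noCutSet_pair hvw.symm) (.inl rfl) (.inr rfl)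
      (by simpa using hvw.ne')).attach (noCutSet_pair hwu.symm) (.inl rfl) (.inr rfl)
      (by simp [huv.ne, hwu.ne'])
  obtain ⟨B, hB, hsub⟩ :=
    exists_isBlock_superset ((noCutSet_pair huv).union_of_isEar (.inl rfl) (.inr rfl) huv.ne hear)
  exact ⟨B, hB, hsub (by simp), hsub (by simp), hsub (by simp)⟩

lemma SimpleGraph.Adj.dist_le_dist_add_one {H : SimpleGraph V} (h : H.Adj u v) (y : V) :
    H.dist u y ≤ H.dist v y + 1 := by
  have := h.reachable.dist_triangle_left y
  rw [dist_eq_one_iff_adj.2 h] at this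
  omega

def cliqueUnion (𝒜 : Set (Set V)) : SimpleGraph V where
  Adj u v := u ≠ v ∧ ∃ D ∈ 𝒜, u ∈ D ∧ v ∈ D
  symm := ⟨fun _ _ ⟨h, D, hD, hu, hv⟩ => ⟨h.symm, D, hD, hv, hu⟩⟩
  loopless := ⟨fun _ h => h.1 rfl⟩

section CliqueUnion

variable {𝒜 𝒜' : Set (Set V)} {D : Set V}

lemma cliqueUnion_adj : (cliqueUnion 𝒜).Adj u v ↔ u ≠ v ∧ ∃ D ∈ 𝒜, u ∈ D ∧ v ∈ D :=
  Iff.rfl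

lemma cliqueUnion_mono (h : 𝒜 ⊆ 𝒜') : cliqueUnion 𝒜 ≤ cliqueUnion 𝒜' :=
  fun _ _ huv =>
    let ⟨hne, D, hD, hu, hv⟩ := cliqueUnion_adj.1 huv
    cliqueUnion_adj.2 ⟨hne, D, h hD, hu, hv⟩

lemma reachable_cliqueUnion_of_mem (hD : D ∈ 𝒜) (hu : u ∈ D) (hv : v ∈ D) :
    (cliqueUnion 𝒜).Reachable u v := by
  rcases eq_or_ne u v with rfl | huv
  · rfl
  · exact Adj.reachable (cliqueUnion_adj.2 ⟨huv, D, hD, hu, hv⟩)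

lemma IsBlockTree.reachable_cliqueUnion (h𝒜 : IsBlockTree 𝒜) (hu : u ∈ ⋃₀ 𝒜)
    (hv : v ∈ ⋃₀ 𝒜) : (cliqueUnion 𝒜).Reachable u v := by
  induction h𝒜 generalizing u v with
  | singleton =>
    rw [Set.sUnion_singleton] at hu hv
    exact reachable_cliqueUnion_of_mem rfl hu hv
  | @attach ℬ B x hℬ hB hx ih =>
    have hxBℬ : x ∈ B ∩ ⋃₀ ℬ := hx.ge rfl
    suffices h : ∀ w ∈ ⋃₀ insert B ℬ, (cliqueUnion (insert B ℬ)).Reachable w x from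
      (h u hu).trans (h v hv).symm
    rintro w ⟨C, rfl | hC, hwC⟩
    · exact reachable_cliqueUnion_of_mem (Set.mem_insert _ _) hwC hxBℬ.1
    · exact (ih ⟨C, hC, hwC⟩ hxBℬ.2).mono (cliqueUnion_mono (Set.subset_insert _ _))

-- `Y` is the union of the members of `𝒜` used by the steps of `p`; as `p` is shortest, each
-- new end lies outside the ear built so far.
lemma exists_isEar_of_length_eq_dist (h𝒜 : ∀ D ∈ 𝒜, NoCutSet G D)
    (p : (cliqueUnion 𝒜).Walk x y) (hp : p.length = (cliqueUnion 𝒜).dist x y) :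
    ∃ Y, IsEar G Y x y ∧ (∀ u ∈ Y, (cliqueUnion 𝒜).dist u y ≤ p.length) ∧
      (x ≠ y → ∃ D ∈ 𝒜, D ⊆ Y) := by
  induction p with
  | nil =>
    exact ⟨{_}, isEar_singleton _, fun u hu => by simp [Set.mem_singleton_iff.1 hu],
      fun h => absurd rfl h⟩
  | @cons x x' y h p ih =>
    rw [Walk.length_cons] at hp ⊢
    have hp' : p.length = (cliqueUnion 𝒜).dist x' y :=
      le_antisymm (by have := h.dist_le_dist_add_one y; omega) (dist_le p)
    obtain ⟨Y, hY, hYdist, -⟩ := ih hp'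
    obtain ⟨-, D, hD, hxD, hx'D⟩ := cliqueUnion_adj.1 h
    refine ⟨D ∪ Y, hY.attach (h𝒜 D hD) hxD hx'D fun hxY => ?_, ?_,
      fun _ => ⟨D, hD, Set.subset_union_left⟩⟩
    · have := hYdist x hxY
      omega
    rintro u (huD | huY)
    · rcases eq_or_ne u x' with rfl | hux'
      · omega
      · have := (cliqueUnion_adj.2 ⟨hux', D, hD, huD, hx'D⟩).dist_le_dist_add_one y
        omega
    · have := hYdist u huY
      omega

/-- Two vertices of a block are never joined through other blocks: a shortest such chain would
be an ear, enlarging the block to a bigger set without cut vertex. -/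
lemma IsBlock.not_reachable_cliqueUnion [Finite V] (h𝒜 : ∀ D ∈ 𝒜, IsBlock G D)
    (hX : IsBlock G X) (hX𝒜 : X ∉ 𝒜) (hx : x ∈ X) (hy : y ∈ X) (hxy : x ≠ y) :
    ¬ (cliqueUnion 𝒜).Reachable x y := by
  intro hr
  obtain ⟨p, hp⟩ := hr.exists_walk_length_eq_dist
  obtain ⟨Y, hY, -, hYD⟩ := exists_isEar_of_length_eq_dist (fun D hD => (h𝒜 D hD).1) p hp
  obtain ⟨D, hD, hDY⟩ := hYD hxy
  have hXY : X = X ∪ Y := hX.2 _ (hX.1.union_of_isEar hx hy hxy hY) Set.subset_union_left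
  have hDX : D = X := (h𝒜 D hD).2 X hX.1 (hDY.trans (hXY ▸ Set.subset_union_right))
  exact hX𝒜 (hDX ▸ hD)

end CliqueUnion

section Blocks

variable [Finite V] {𝒜 : Set (Set V)} {D : Set V}

lemma exists_isBlock_mem [Nontrivial V] (hconn : G.Connected) (v : V) :
    ∃ B, IsBlock G B ∧ v ∈ B :=
  let ⟨_, hv⟩ := hconn.preconnected.exists_adj_of_nontrivial v
  let ⟨B, hB, hvB, _⟩ := hv.exists_isBlock
  ⟨B, hB, hvB⟩

lemma exists_isBlock_notMem_meeting (hconn : G.Connected) (hD : IsBlock G D) (hD𝒜 : D ∉ 𝒜)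
    (ha : a ∈ ⋃₀ 𝒜) : ∃ C, IsBlock G C ∧ C ∉ 𝒜 ∧ (C ∩ ⋃₀ 𝒜).Nonempty := by
  obtain ⟨d, hd⟩ := Set.nonempty_of_ncard_ne_zero (by have := hD.1.1; omega : D.ncard ≠ 0)
  induction hconn a d |>.some with
  | nil => exact ⟨D, hD, hD𝒜, _, hd, ha⟩
  | cons h _ ih =>
    obtain ⟨C, hC, haC, ha'C⟩ := h.exists_isBlock
    by_cases hC𝒜 : C ∈ 𝒜
    · exact ih ⟨C, hC𝒜, ha'C⟩ hd
    · exact ⟨C, hC, hC𝒜, _, haC, ha⟩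

theorem isBlockTree_blocks [Nontrivial V] (hconn : G.Connected) :
    IsBlockTree {B | IsBlock G B} := by
  obtain ⟨B₀, hB₀, -⟩ := exists_isBlock_mem hconn hconn.nonempty.some
  obtain ⟨𝒜, h𝒜⟩ := (Set.toFinite {𝒜 | IsBlockTree 𝒜 ∧ 𝒜 ⊆ {B | IsBlock G B}}).exists_maximal
    ⟨{B₀}, .singleton hB₀.1.1, Set.singleton_subset_iff.2 hB₀⟩
  obtain ⟨h𝒜tree, h𝒜blocks⟩ := h𝒜.prop
  suffices h : 𝒜 = {B | IsBlock G B} from h ▸ h𝒜tree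
  by_contra hne
  obtain ⟨D, hD, hD𝒜⟩ := Set.exists_of_ssubset (h𝒜blocks.ssubset_of_ne hne)
  obtain ⟨a, ha⟩ := h𝒜tree.sUnion_nonempty
  obtain ⟨C, hC, hC𝒜, x, hx⟩ := exists_isBlock_notMem_meeting hconn hD hD𝒜 ha
  have hCx : C ∩ ⋃₀ 𝒜 = {x} := Set.Subsingleton.eq_singleton_of_mem (fun y hy z hz => by_contra
    fun hyz => hC.not_reachable_cliqueUnion h𝒜blocks hC𝒜 hy.1 hz.1 hyz
      (h𝒜tree.reachable_cliqueUnion hy.2 hz.2)) hx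
  have := h𝒜.eq_of_subset ⟨.attach h𝒜tree hC.1.1 hCx, Set.insert_subset hC h𝒜blocks⟩
    (Set.subset_insert _ _)
  exact hC𝒜 (this ▸ Set.mem_insert C 𝒜)

lemma deltaConvex_iff_blockConvex (hbg : ∀ B : Set V, IsBlock G B → CompleteOn G B)
    {T : Set V} :
    DeltaConvex G T ↔ BlockConvex {B | IsBlock G B} T := by
  constructor
  · rintro hT B hB ⟨u, ⟨huB, huT⟩, v, ⟨hvB, hvT⟩, huv⟩ w hwB
    rcases eq_or_ne w u with rfl | hwu
    · exact huT
    rcases eq_or_ne w v with rfl | hwv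
    · exact hvT
    exact hT huT hvT (hbg B hB u huB v hvB huv) (hbg B hB w hwB u huB hwu)
      (hbg B hB w hwB v hvB hwv)
  · intro hT u v w hu hv huv hwu hwv
    obtain ⟨B, hB, huB, hvB, hwB⟩ := exists_isBlock_of_triangle huv hwv.symm hwu
    exact hT B hB ⟨u, ⟨huB, hu⟩, v, ⟨hvB, hv⟩, huv.ne⟩ hwB

lemma hellyIndep_iff_hellyCore_eq_empty (hbg : ∀ B : Set V, IsBlock G B → CompleteOn G B)
    {S : Set V} :
    HellyIndep G S ↔ hellyCore {B | IsBlock G B} S = ∅ := by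
  have hhull : ∀ P, deltaHull G P = blockHull {B | IsBlock G B} P := fun P => by
    simp only [deltaHull, blockHull, deltaConvex_iff_blockConvex hbg]
  simp only [HellyIndep, hellyCore, hhull]

end Blocks

lemma hellyNumber_eq {m : ℕ} (hS : ∃ S, HellyIndep G S ∧ S.ncard = m)
    (hle : ∀ S, HellyIndep G S → S.ncard ≤ m) : hellyNumber G = m :=
  IsGreatest.csSup_eq ⟨hS, by rintro _ ⟨S, hS, rfl⟩; exact hle S hS⟩

end Graph

/-- If `G` is a finite simple connected block graph (every block complete)
with exactly `ℓ` blocks, then `h_Δ(G) = ℓ + 1`. -/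
theorem stmt_8 {V : Type*} [Fintype V] (G : SimpleGraph V) (hconn : G.Connected)
    (hbg : ∀ B : Set V, IsBlock G B → CompleteOn G B)
    (ℓ : ℕ) (hℓ : {B : Set V | IsBlock G B}.ncard = ℓ) :
    hellyNumber G = ℓ + 1 := by
  subst hℓ
  rcases subsingleton_or_nontrivial V with hV | hV
  · have hnoblock : {B : Set V | IsBlock G B} = ∅ := Set.eq_empty_of_forall_notMem fun B hB =>
      absurd (hB.1.1.trans (Set.ncard_le_one_of_subsingleton B)) (by omega)
    obtain ⟨v⟩ := hconn.nonempty
    rw [hnoblock, Set.ncard_empty]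
    refine hellyNumber_eq ⟨{v}, ?_, Set.ncard_singleton v⟩
      fun S _ => Set.ncard_le_one_of_subsingleton S
    rw [hellyIndep_iff_hellyCore_eq_empty hbg, hnoblock, hellyCore_singleton]
  · have htree := isBlockTree_blocks (G := G) hconn
    have hcover : ⋃₀ {B | IsBlock G B} = Set.univ := Set.eq_univ_of_forall fun v =>
      let ⟨B, hB, hvB⟩ := exists_isBlock_mem hconn v
      ⟨B, hB, hvB⟩
    obtain ⟨S, -, hS, hcore⟩ := htree.exists_hellyCore_eq_empty
    refine hellyNumber_eq ⟨S, (hellyIndep_iff_hellyCore_eq_empty hbg).2 hcore, hS⟩ fun S hS => ?_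
    by_contra! h
    exact (htree.hellyCore_nonempty (hcover ▸ Set.subset_univ S) h).ne_empty
      ((hellyIndep_iff_hellyCore_eq_empty hbg).1 hS)
end

section
/- For every natural number n > 1, there exists a finite simple connected graph G whose Radon number with respect to Δ-convexity satisfies r_Δ(G) = n. -/
variable {V : Type*}

lemma star_triangle_free (n : ℕ) [NeZero n] :
    ∀ u v w : Fin n,
      (SimpleGraph.fromRel (fun a b => a = 0 ∧ b ≠ 0)).Adj u v →
      (SimpleGraph.fromRel (fun a b => a = 0 ∧ b ≠ 0)).Adj w u →
      (SimpleGraph.fromRel (fun a b => a = 0 ∧ b ≠ 0)).Adj w v → False := by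
  intro u v w huv hwu hwv
  simp only [SimpleGraph.fromRel_adj] at huv hwu hwv
  obtain ⟨hne1, h1⟩ := huv
  obtain ⟨hne2, h2⟩ := hwu
  obtain ⟨hne3, h3⟩ := hwv
  rcases h1 with ⟨hu0, hv0⟩ | ⟨hv0, hu0⟩ <;>
  rcases h2 with ⟨hw0, _⟩ | ⟨hu0', _⟩ <;>
  rcases h3 with ⟨hw0', _⟩ | ⟨hv0', _⟩ <;> simp_all

lemma deltaHull_eq_of_convex {V : Type*} (G : SimpleGraph V) (S : Set V)
    (h : DeltaConvex G S) : deltaHull G S = S := by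
  apply subset_antisymm
  · exact Set.sInter_subset_of_mem ⟨subset_rfl, h⟩
  · intro x hx T hT
    exact hT.1 hx

/-- For every natural number `n > 1`, there is a finite simple connected graph
whose Radon number w.r.t. Δ-convexity is `n`. -/
theorem stmt_15 (n : ℕ) (hn : 1 < n) :
    ∃ (V : Type) (_ : Fintype V) (G : SimpleGraph V),
      G.Connected ∧ radonNumber G = n := by
  classical
  haveI : NeZero n := ⟨by omega⟩
  set G : SimpleGraph (Fin n) := SimpleGraph.fromRel (fun a b => a = 0 ∧ b ≠ 0) with hG
  have hpos : 0 < n := by omega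
  have h0 : (0 : Fin n) ≠ ⟨1, hn⟩ := by
    intro h; exact absurd (congrArg Fin.val h) (by simp)
  have hadj : ∀ v : Fin n, v ≠ 0 → G.Adj 0 v := by
    intro v hv
    rw [hG, SimpleGraph.fromRel_adj]
    exact ⟨fun h => hv h.symm, Or.inl ⟨rfl, hv⟩⟩
  have hconn : G.Connected := by
    rw [SimpleGraph.connected_iff]
    refine ⟨?_, ⟨0⟩⟩
    intro a b
    by_cases hab : a = b
    · exact hab ▸ SimpleGraph.Reachable.refl a
    · by_cases ha : a = 0
      · subst ha
        exact (hadj b (fun h => hab h.symm)).reachable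
      · by_cases hb : b = 0
        · subst hb
          exact ((hadj a ha).reachable).symm
        · exact ((hadj a ha).reachable).symm.trans (hadj b hb).reachable
  -- every set is Δ-convex
  have hconv : ∀ S : Set (Fin n), DeltaConvex G S := by
    intro S u v w _ _ huv hwu hwv
    exact absurd huv (fun h => star_triangle_free n u v w h hwu hwv)
  have hhull : ∀ S : Set (Fin n), deltaHull G S = S :=
    fun S => deltaHull_eq_of_convex G S (hconv S)
  -- every set is Radon independent
  have hindep : ∀ S : Set (Fin n), RadonIndep G S := by
    rintro S ⟨S₁, S₂, _, hdisj, _, _, hne⟩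
    rw [hhull S₁, hhull S₂] at hne
    exact hne.not_disjoint hdisj
  have hbound : ∀ m ∈ {m : ℕ | ∃ S : Set (Fin n), RadonIndep G S ∧ S.ncard = m},
      m ≤ n := by
    rintro m ⟨S, _, rfl⟩
    calc S.ncard ≤ (Set.univ : Set (Fin n)).ncard :=
          Set.ncard_le_ncard (Set.subset_univ S) Set.finite_univ
      _ = n := by simp [Set.ncard_univ]
  have hmem : n ∈ {m : ℕ | ∃ S : Set (Fin n), RadonIndep G S ∧ S.ncard = m} :=
    ⟨Set.univ, hindep _, by simp [Set.ncard_univ]⟩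
  refine ⟨Fin n, inferInstance, G, hconn, ?_⟩
  exact le_antisymm (csSup_le ⟨n, hmem⟩ hbound) (le_csSup ⟨n, hbound⟩ hmem)
end
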